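/- Let X = (X_1, X_2, …) be a random element of the real Hilbert space ℓ² with ∑_{k=1}^∞ E(X_k²) < ∞ and law μ. Let Y = (Y_1, Y_2, …) be the residual sequence of X, with τ_k² = E(Y_k²) > 0 for all k ≥ 1. Assume Y is α-mixing with mixing coefficients {α_k} satisfying ∑_{k=1}^∞ α_k^{1−1/(2p)} < ∞ for some p ≥ 1, and sup_{k≥1} E[(Y_k/τ_k)^{2r}] < ∞ for some r > p. Then PD(x) = 0 for μ-almost every x ∈ ℓ². -/

import Mathlib

open MeasureTheory ProbabilityTheory ENNReal

/-- The projection depth of `x` with respect to the probability measure `μ` on `ℓ²`: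
`PD(x) = [1 + sup_u |⟨u,x⟩ − E⟨u,X⟩| / sd(⟨u,X⟩)]⁻¹`, the supremum being over all `u`
for which the variance of `⟨u,X⟩` is strictly positive (computed in `ℝ≥0∞`, so that an
unbounded supremum gives depth `0`). -/
noncomputable def projDepth [MeasurableSpace (lp (fun _ : ℕ => ℝ) 2)]
    (μ : Measure (lp (fun _ : ℕ => ℝ) 2)) (x : lp (fun _ : ℕ => ℝ) 2) : ℝ≥0∞ :=
  (1 + ⨆ (u : lp (fun _ : ℕ => ℝ) 2)
      (_ : 0 < ∫ z, ((inner (𝕜 := ℝ) u z : ℝ) - ∫ w, (inner (𝕜 := ℝ) u w : ℝ) ∂μ) ^ 2 ∂μ),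
    ENNReal.ofReal (|(inner (𝕜 := ℝ) u x : ℝ) - ∫ w, (inner (𝕜 := ℝ) u w : ℝ) ∂μ| /
      Real.sqrt (∫ z, ((inner (𝕜 := ℝ) u z : ℝ) - ∫ w, (inner (𝕜 := ℝ) u w : ℝ) ∂μ) ^ 2 ∂μ)))⁻¹

/-!
Let `e k ∈ ℓ²` be the direction with `⟪e k, X⟫ = Y k + b k`. Since the residuals are centred and
uncorrelated, the direction `u = ∑_{k<n} (Y k x / τ k ^ 2) • e k` gives both `⟪u, x⟫ - E⟪u, X⟫`
and `Var⟪u, X⟫` equal to `S_n(x) = ∑_{k<n} (Y k x / τ k) ^ 2`, so the outlyingness of `x` is at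
least `√S_n(x)`, and `PD(x) = 0` as soon as `S_n(x) → ∞`. This happens whenever
`|Y k x / τ k| ≥ 1/2` for infinitely many `k`.

The events `A k = {|Y k / τ k| ≥ 1/2}` have probability bounded below by some `c > 0`: since
`E (Y k / τ k) ^ 2 = 1`, the event `A k` carries at least `3/4` of this second moment, and Hölder's
inequality with the uniform `2r`-th moment bound (`r > 1`) turns this into a lower bound on
`P(A k)` (a Paley–Zygmund argument). Finally, α-mixing along the lattice `K, K + g, K + 2g, …`
gives `P(Aᶜ_K ∩ Aᶜ_{K+g} ∩ … ∩ Aᶜ_{K+Jg}) ≤ (1 - c) ^ J + α_g / c`; letting `J → ∞` and then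
`g → ∞` shows that almost surely infinitely many `A k` occur.
-/

open Filter Topology Finset
open scoped RealInnerProductSpace

section Moments

variable {Ω : Type*} [MeasurableSpace Ω] {μ : Measure Ω}

theorem setIntegral_le_integral_rpow_mul_measureReal [IsFiniteMeasure μ] {p q : ℝ}
    (hpq : p.HolderConjugate q) {g : Ω → ℝ} (hg : 0 ≤ g) (hgp : MemLp g (.ofReal p) μ)
    {s : Set Ω} (hs : MeasurableSet s) :
    ∫ ω in s, g ω ∂μ ≤ (∫ ω, g ω ^ p ∂μ) ^ (1 / p) * μ.real s ^ (1 / q) := by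
  have hHolder := integral_mul_le_Lp_mul_Lq_of_nonneg hpq (ae_of_all _ hg)
    (ae_of_all _ (s.indicator_nonneg fun _ _ => zero_le_one))
    hgp (memLp_indicator_const _ hs (1 : ℝ) (Or.inr (measure_ne_top μ s)))
  have hind : (fun ω => s.indicator (fun _ => (1 : ℝ)) ω ^ q) = s.indicator fun _ => 1 := by
    funext ω
    by_cases hω : ω ∈ s <;> simp [hω, Real.zero_rpow hpq.symm.ne_zero]
  calc ∫ ω in s, g ω ∂μ = ∫ ω, g ω * s.indicator (fun _ => (1 : ℝ)) ω ∂μ := by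
        rw [← integral_indicator hs]
        congr 1 with ω
        by_cases hω : ω ∈ s <;> simp [hω]
    _ ≤ _ := hHolder
    _ = _ := by rw [hind, integral_indicator_const _ hs, smul_eq_mul, mul_one]

theorem three_quarters_le_integral_rpow_mul_measureReal [IsProbabilityMeasure μ] {r q : ℝ}
    (hrq : r.HolderConjugate q) {f : Ω → ℝ} (hf : Measurable f)
    (hf2 : ∫ ω, f ω ^ 2 ∂μ = 1) (hfr : Integrable (fun ω => |f ω| ^ (2 * r)) μ) :
    3 / 4 ≤ (∫ ω, |f ω| ^ (2 * r) ∂μ) ^ (1 / r) * μ.real {ω | 1 / 2 ≤ |f ω|} ^ (1 / q) := by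
  set s := {ω | 1 / 2 ≤ |f ω|}
  have hs : MeasurableSet s := measurableSet_le measurable_const hf.abs
  have hsq_int : Integrable (fun ω => f ω ^ 2) μ := .of_integral_ne_zero (by simp [hf2])
  have hpow : ∀ x : ℝ, (x ^ 2) ^ r = |x| ^ (2 * r) := fun x => by
    rw [← sq_abs, ← Real.rpow_natCast, ← Real.rpow_mul (abs_nonneg x)]
    norm_num
  have hcompl : ∫ ω in sᶜ, f ω ^ 2 ∂μ ≤ 1 / 4 := calc
    _ ≤ ∫ _ in sᶜ, (1 / 4 : ℝ) ∂μ := by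
      refine setIntegral_mono_on hsq_int.integrableOn (integrableOn_const (measure_ne_top _ _))
        hs.compl fun ω hω => ?_
      have : |f ω| < 1 / 2 := not_le.1 hω
      nlinarith [abs_nonneg (f ω), sq_abs (f ω)]
    _ ≤ 1 / 4 := by
      rw [setIntegral_const, smul_eq_mul]
      nlinarith [measureReal_nonneg (μ := μ) (s := sᶜ), measureReal_le_one (μ := μ) (s := sᶜ)]
  have hs_ge : 3 / 4 ≤ ∫ ω in s, f ω ^ 2 ∂μ := by
    linarith [integral_add_compl hs hsq_int]
  have hmem : MemLp (fun ω => f ω ^ 2) (.ofReal r) μ := by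
    refine (integrable_norm_rpow_iff (hf.pow_const 2).aestronglyMeasurable
      (by simpa using hrq.pos) ofReal_ne_top).1 ?_
    simpa [ENNReal.toReal_ofReal hrq.nonneg, hpow] using hfr
  calc 3 / 4 ≤ ∫ ω in s, f ω ^ 2 ∂μ := hs_ge
    _ ≤ _ := setIntegral_le_integral_rpow_mul_measureReal hrq (fun ω => sq_nonneg (f ω)) hmem hs
    _ = _ := by simp only [hpow]

theorem exists_pos_forall_le_measureReal_half_le_abs [IsProbabilityMeasure μ] {ι : Type*}
    {r C : ℝ} (hr : 1 < r) {f : ι → Ω → ℝ} (hf : ∀ i, Measurable (f i))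
    (hf2 : ∀ i, ∫ ω, f i ω ^ 2 ∂μ = 1) (hfr : ∀ i, Integrable (fun ω => |f i ω| ^ (2 * r)) μ)
    (hC : ∀ i, ∫ ω, |f i ω| ^ (2 * r) ∂μ ≤ C) :
    ∃ c > 0, ∀ i, c ≤ μ.real {ω | 1 / 2 ≤ |f i ω|} := by
  have hrq := Real.HolderConjugate.conjExponent hr
  set q := r.conjExponent
  set K := max C 1 ^ (1 / r)
  have hK : 1 ≤ K := Real.one_le_rpow (le_max_right _ _) (by positivity)
  refine ⟨(3 / (4 * K)) ^ q, by positivity, fun i => ?_⟩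
  set t := μ.real {ω | 1 / 2 ≤ |f i ω|}
  have hKt : 3 / 4 ≤ K * t ^ (1 / q) := by
    refine (three_quarters_le_integral_rpow_mul_measureReal hrq (hf i) (hf2 i) (hfr i)).trans ?_
    gcongr
    exact Real.rpow_le_rpow (integral_nonneg fun ω => by positivity)
      ((hC i).trans (le_max_left _ _)) (by positivity)
  calc (3 / (4 * K)) ^ q ≤ (t ^ (1 / q)) ^ q := by
        gcongr
        · exact hrq.symm.nonneg
        rw [div_le_iff₀ (by positivity)]
        linarith
    _ = t := by
        rw [← Real.rpow_mul measureReal_nonneg, one_div_mul_cancel hrq.symm.ne_zero,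
          Real.rpow_one]

end Moments

theorem tendsto_sum_sq_atTop_of_frequently_le_abs {w : ℕ → ℝ} {ε : ℝ} (hε : 0 < ε)
    (hw : ∃ᶠ k in atTop, ε ≤ |w k|) : Tendsto (fun n => ∑ k ∈ range n, w k ^ 2) atTop atTop := by
  refine (not_summable_iff_tendsto_nat_atTop_of_nonneg fun k => sq_nonneg (w k)).1 fun hs => ?_
  obtain ⟨k, hk, hsmall⟩ := (hw.and_eventually
    (hs.tendsto_atTop_zero.eventually (gt_mem_nhds (pow_pos hε 2)))).exists
  nlinarith [sq_abs (w k)]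

section Mixing

variable {Ω : Type*} [MeasurableSpace Ω] {μ : Measure Ω} [IsProbabilityMeasure μ]
  {𝓕 𝓖 : ℕ → MeasurableSpace Ω} {a : ℕ → ℝ} {A : ℕ → Set Ω} {c : ℝ}

theorem measureReal_biInter_compl_le
    (hmix : ∀ n k (F G : Set Ω), MeasurableSet[𝓕 n] F → MeasurableSet[𝓖 (n + k)] G →
      |μ.real (F ∩ G) - μ.real F * μ.real G| ≤ a k)
    (h𝓕 : Monotone 𝓕) (hA : ∀ k, MeasurableSet (A k)) (hA𝓕 : ∀ k, MeasurableSet[𝓕 k] (A k))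
    (hA𝓖 : ∀ k, MeasurableSet[𝓖 k] (A k)) (hc : 0 < c) (hcA : ∀ k, c ≤ μ.real (A k))
    (K g J : ℕ) :
    μ.real (⋂ i ≤ J, (A (K + g * i))ᶜ) ≤ (1 - c) ^ J + a g / c := by
  have ha : 0 ≤ a g := (abs_nonneg _).trans
    (hmix 0 g ∅ ∅ (@MeasurableSet.empty _ (𝓕 0)) (@MeasurableSet.empty _ (𝓖 _)))
  induction J with
  | zero =>
    have : 0 ≤ a g / c := by positivity
    simp only [pow_zero]
    linarith [measureReal_le_one (μ := μ) (s := ⋂ i ≤ 0, (A (K + g * i))ᶜ)]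
  | succ J ih =>
    set F := ⋂ i ≤ J, (A (K + g * i))ᶜ
    have hF : MeasurableSet[𝓕 (K + g * J)] F :=
      MeasurableSet.biInter (Set.to_countable _) fun i hi =>
        (h𝓕 (by gcongr; exact hi) _ (hA𝓕 _)).compl
    have hG : MeasurableSet[𝓖 (K + g * J + g)] (A (K + g * (J + 1)))ᶜ :=
      (by rw [mul_add_one, ← add_assoc]; exact hA𝓖 _ : MeasurableSet[𝓖 (K + g * J + g)] _).compl
    have hmixJ := (abs_le.1 (hmix _ _ _ _ hF hG)).2
    have hGc : μ.real (A (K + g * (J + 1)))ᶜ ≤ 1 - c := by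
      rw [measureReal_compl (hA _), probReal_univ]
      linarith [hcA (K + g * (J + 1))]
    have h1c : 0 ≤ 1 - c := by linarith [hcA 0, measureReal_le_one (μ := μ) (s := A 0)]
    rw [Set.biInter_le_succ]
    calc μ.real (F ∩ (A (K + g * (J + 1)))ᶜ)
        ≤ μ.real F * μ.real (A (K + g * (J + 1)))ᶜ + a g := by linarith
      _ ≤ ((1 - c) ^ J + a g / c) * (1 - c) + a g := by gcongr
      _ = (1 - c) ^ (J + 1) + a g / c := by field_simp; ring

theorem ae_frequently_mem_of_mixing
    (hmix : ∀ n k (F G : Set Ω), MeasurableSet[𝓕 n] F → MeasurableSet[𝓖 (n + k)] G →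
      |μ.real (F ∩ G) - μ.real F * μ.real G| ≤ a k)
    (ha : Tendsto a atTop (𝓝 0))
    (h𝓕 : Monotone 𝓕) (hA : ∀ k, MeasurableSet (A k)) (hA𝓕 : ∀ k, MeasurableSet[𝓕 k] (A k))
    (hA𝓖 : ∀ k, MeasurableSet[𝓖 k] (A k)) (hc : 0 < c) (hcA : ∀ k, c ≤ μ.real (A k)) :
    ∀ᵐ ω ∂μ, ∃ᶠ k in atTop, ω ∈ A k := by
  have h1c : 0 ≤ 1 - c := by linarith [hcA 0, measureReal_le_one (μ := μ) (s := A 0)]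
  have hnull : ∀ K, μ.real (⋂ k ≥ K, (A k)ᶜ) = 0 := fun K => by
    set S := ⋂ k ≥ K, (A k)ᶜ
    have hS : ∀ g J, μ.real S ≤ (1 - c) ^ J + a g / c := fun g J =>
      (measureReal_mono (Set.iInter₂_mono' fun i _ => ⟨K + g * i, by omega, le_rfl⟩)).trans
        (measureReal_biInter_compl_le hmix h𝓕 hA hA𝓕 hA𝓖 hc hcA K g J)
    have hSg : ∀ g, μ.real S ≤ a g / c := fun g =>
      ge_of_tendsto' (by simpa using (tendsto_pow_atTop_nhds_zero_of_lt_one h1c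
        (by linarith)).add_const (a g / c)) (hS g)
    exact le_antisymm (ge_of_tendsto' (by simpa using ha.div_const c) hSg) measureReal_nonneg
  have hae : ∀ K, ∀ᵐ ω ∂μ, ω ∉ ⋂ k ≥ K, (A k)ᶜ := fun K =>
    measure_eq_zero_iff_ae_notMem.1 ((measureReal_eq_zero_iff (measure_ne_top _ _)).1 (hnull K))
  filter_upwards [ae_all_iff.2 hae] with ω hω
  simpa [frequently_atTop] using hω

theorem ae_frequently_mem_preimage_of_mixing {β : Type*} [mβ : MeasurableSpace β] {Y : ℕ → Ω → β}
    (hY : ∀ k, Measurable (Y k))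
    (hmix : ∀ n k (F G : Set Ω),
      MeasurableSet[⨆ i ∈ Finset.Iic n, MeasurableSpace.comap (Y i) mβ] F →
      MeasurableSet[⨆ (i : ℕ) (_ : n + k ≤ i), MeasurableSpace.comap (Y i) mβ] G →
      |μ.real (F ∩ G) - μ.real F * μ.real G| ≤ a k)
    (ha : Tendsto a atTop (𝓝 0)) {S : ℕ → Set β} (hS : ∀ k, MeasurableSet (S k)) (hc : 0 < c)
    (hcS : ∀ k, c ≤ μ.real (Y k ⁻¹' S k)) :
    ∀ᵐ ω ∂μ, ∃ᶠ k in atTop, Y k ω ∈ S k := by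
  have hpre : ∀ k, MeasurableSet[MeasurableSpace.comap (Y k) mβ] (Y k ⁻¹' S k) :=
    fun k => ⟨S k, hS k, rfl⟩
  refine ae_frequently_mem_of_mixing (A := fun k => Y k ⁻¹' S k)
    (𝓕 := fun n => ⨆ i ∈ Finset.Iic n, MeasurableSpace.comap (Y i) mβ)
    (𝓖 := fun m => ⨆ (i : ℕ) (_ : m ≤ i), MeasurableSpace.comap (Y i) mβ)
    hmix ha ?_ (fun k => hY k (hS k)) (fun k => ?_) (fun k => ?_) hc hcS
  · exact fun _ _ hmn => iSup₂_mono' fun i hi => ⟨i, mem_Iic.2 ((mem_Iic.1 hi).trans hmn), le_rfl⟩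
  · exact le_iSup₂ (f := fun i (_ : i ∈ Finset.Iic k) => MeasurableSpace.comap (Y i) _)
      k (mem_Iic.2 le_rfl) _ (hpre k)
  · exact le_iSup₂ (f := fun i (_ : k ≤ i) => MeasurableSpace.comap (Y i) _) k le_rfl _ (hpre k)

end Mixing

theorem variance_sum_const_mul_of_covariance_eq_zero {Ω ι : Type*} [MeasurableSpace Ω]
    {μ : Measure Ω} [IsFiniteMeasure μ] {s : Finset ι} {Y : ι → Ω → ℝ}
    (hY : ∀ i ∈ s, MemLp (Y i) 2 μ) (hcov : ∀ i ∈ s, ∀ j ∈ s, i ≠ j → cov[Y i, Y j; μ] = 0)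
    (c : ι → ℝ) :
    Var[fun ω => ∑ i ∈ s, c i * Y i ω; μ] = ∑ i ∈ s, c i ^ 2 * Var[Y i; μ] := by
  rw [variance_fun_sum' fun i hi => (hY i hi).const_mul (c i)]
  refine sum_congr rfl fun i hi => ?_
  rw [sum_eq_single_of_mem i hi fun j hj hji => by
      rw [covariance_const_mul_left, covariance_const_mul_right, hcov i hi j hj hji.symm]; ring,
    covariance_const_mul_left, covariance_const_mul_right,
    covariance_self (hY i hi).aestronglyMeasurable.aemeasurable]
  ring

local notation "ℓ²" => lp (fun _ : ℕ => ℝ) 2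

theorem inner_lpSingle_one (k : ℕ) (z : ℓ²) : ⟪lp.single 2 k (1 : ℝ), z⟫ = z k := by
  simp [lp.inner_single_left]

theorem continuous_lp_apply (k : ℕ) : Continuous fun z : ℓ² => z k :=
  (lp.lipschitzWith_one_eval 2 k).continuous

theorem projDepth_eq_zero_of_forall_exists_le [MeasurableSpace ℓ²] (μ : Measure ℓ²) (x : ℓ²)
    (h : ∀ ρ : ℝ, ∃ u : ℓ², 0 < ∫ z, (⟪u, z⟫ - ∫ w, ⟪u, w⟫ ∂μ) ^ 2 ∂μ ∧
      ρ ≤ |⟪u, x⟫ - ∫ w, ⟪u, w⟫ ∂μ| / √(∫ z, (⟪u, z⟫ - ∫ w, ⟪u, w⟫ ∂μ) ^ 2 ∂μ)) :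
    projDepth μ x = 0 := by
  rw [projDepth, ENNReal.inv_eq_zero, ENNReal.add_eq_top]
  refine Or.inr (ENNReal.eq_top_of_forall_nnreal_le fun ρ => ?_)
  obtain ⟨u, hu, hρ⟩ := h ρ
  exact le_iSup₂_of_le u hu (ENNReal.ofReal_coe_nnreal.symm.trans_le (ENNReal.ofReal_le_ofReal hρ))

noncomputable def residualDir (β : ℕ → ℕ → ℝ) (k : ℕ) : ℓ² :=
  lp.single 2 k 1 - ∑ j ∈ range k, β k j • lp.single 2 j 1

theorem inner_residualDir (β : ℕ → ℕ → ℝ) (k : ℕ) (z : ℓ²) :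
    ⟪residualDir β k, z⟫ = z k - ∑ j ∈ range k, β k j * z j := by
  simp [residualDir, inner_sub_left, sum_inner, real_inner_smul_left, inner_lpSingle_one]

section Residual

variable {Y : ℕ → ℓ² → ℝ} {b : ℕ → ℝ} {β : ℕ → ℕ → ℝ}

theorem inner_sum_residualDir (hYdef : ∀ k z, Y k z = z k - b k - ∑ j ∈ range k, β k j * z j)
    (n : ℕ) (c : ℕ → ℝ) (z : ℓ²) :
    ⟪∑ k ∈ range n, c k • residualDir β k, z⟫ =
      ∑ k ∈ range n, c k * Y k z + ∑ k ∈ range n, c k * b k := by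
  simp only [sum_inner, real_inner_smul_left, inner_residualDir, hYdef, ← sum_add_distrib]
  exact sum_congr rfl fun k _ => by ring

theorem continuous_residual (hYdef : ∀ k z, Y k z = z k - b k - ∑ j ∈ range k, β k j * z j)
    (k : ℕ) : Continuous (Y k) := by
  rw [show Y k = _ from funext (hYdef k)]
  exact ((continuous_lp_apply k).sub continuous_const).sub
    (continuous_finsetSum _ fun j _ => continuous_const.mul (continuous_lp_apply j))

variable [MeasurableSpace ℓ²] [BorelSpace ℓ²] {μ : Measure ℓ²}

theorem memLp_lp_apply (hX2 : ∀ k, Integrable (fun z : ℓ² => z k ^ 2) μ) (k : ℕ) :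
    MemLp (fun z : ℓ² => z k) 2 μ :=
  (memLp_two_iff_integrable_sq (continuous_lp_apply k).aestronglyMeasurable).2 (hX2 k)

theorem memLp_sum_mul_lp_apply (hX2 : ∀ k, Integrable (fun z : ℓ² => z k ^ 2) μ)
    (s : Finset ℕ) (c : ℕ → ℝ) : MemLp (fun z : ℓ² => ∑ j ∈ s, c j * z j) 2 μ :=
  memLp_finsetSum _ fun j _ => (memLp_lp_apply hX2 j).const_mul _

variable [IsProbabilityMeasure μ]

theorem memLp_residual (hX2 : ∀ k, Integrable (fun z : ℓ² => z k ^ 2) μ)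
    (hYdef : ∀ k z, Y k z = z k - b k - ∑ j ∈ range k, β k j * z j) (k : ℕ) :
    MemLp (Y k) 2 μ := by
  rw [show Y k = _ from funext (hYdef k)]
  exact ((memLp_lp_apply hX2 k).sub (memLp_const _)).sub (memLp_sum_mul_lp_apply hX2 _ _)

theorem covariance_residual_eq_zero (hX2 : ∀ k, Integrable (fun z : ℓ² => z k ^ 2) μ)
    (hYdef : ∀ k z, Y k z = z k - b k - ∑ j ∈ range k, β k j * z j)
    (hYmean : ∀ k, ∫ z, Y k z ∂μ = 0) (hYorth : ∀ k j, j < k → ∫ z, Y k z * z j ∂μ = 0)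
    {k l : ℕ} (hkl : k ≠ l) : cov[Y k, Y l; μ] = 0 := by
  wlog hlk : l < k generalizing k l
  · rw [covariance_comm]
    exact this hkl.symm (by omega)
  have hYk := memLp_residual hX2 hYdef k
  have hcoord : ∀ j < k, cov[Y k, fun z : ℓ² => z j; μ] = 0 := fun j hj => by
    rw [covariance_eq_sub hYk (memLp_lp_apply hX2 j)]
    simp [hYorth k j hj, hYmean k]
  have hXl : MemLp (fun z : ℓ² => z l - b l) 2 μ := (memLp_lp_apply hX2 l).sub (memLp_const _)
  rw [show Y l = _ from funext (hYdef l),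
    covariance_fun_sub_right hYk hXl (memLp_sum_mul_lp_apply hX2 _ _),
    covariance_sub_const_right ((memLp_lp_apply hX2 l).integrable one_le_two),
    covariance_fun_sum_right' (fun j _ => (memLp_lp_apply hX2 j).const_mul _) hYk]
  simp only [covariance_const_mul_right, hcoord l hlk]
  rw [sum_eq_zero fun j hj => by rw [hcoord j ((mem_range.1 hj).trans hlk), mul_zero]]
  simp

theorem variance_residual (hX2 : ∀ k, Integrable (fun z : ℓ² => z k ^ 2) μ)
    (hYdef : ∀ k z, Y k z = z k - b k - ∑ j ∈ range k, β k j * z j)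
    (hYmean : ∀ k, ∫ z, Y k z ∂μ = 0) {τ : ℕ → ℝ} (hτ : ∀ k, ∫ z, Y k z ^ 2 ∂μ = τ k ^ 2)
    (k : ℕ) : Var[Y k; μ] = τ k ^ 2 := by
  rw [variance_of_integral_eq_zero (memLp_residual hX2 hYdef k).aestronglyMeasurable.aemeasurable
    (hYmean k), hτ]

theorem integral_sum_mul_residual (hX2 : ∀ k, Integrable (fun z : ℓ² => z k ^ 2) μ)
    (hYdef : ∀ k z, Y k z = z k - b k - ∑ j ∈ range k, β k j * z j)
    (hYmean : ∀ k, ∫ z, Y k z ∂μ = 0) (n : ℕ) (c : ℕ → ℝ) :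
    ∫ z, ∑ k ∈ range n, c k * Y k z ∂μ = 0 := by
  rw [integral_finsetSum _ fun k _ =>
    ((memLp_residual hX2 hYdef k).integrable one_le_two).const_mul _]
  simp [integral_const_mul, hYmean]

theorem inner_sum_residualDir_sub_integral (hX2 : ∀ k, Integrable (fun z : ℓ² => z k ^ 2) μ)
    (hYdef : ∀ k z, Y k z = z k - b k - ∑ j ∈ range k, β k j * z j)
    (hYmean : ∀ k, ∫ z, Y k z ∂μ = 0) (n : ℕ) (c : ℕ → ℝ) (x : ℓ²) :
    ⟪∑ k ∈ range n, c k • residualDir β k, x⟫ - ∫ z, ⟪∑ k ∈ range n, c k • residualDir β k, z⟫ ∂μ =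
      ∑ k ∈ range n, c k * Y k x := by
  have hint : Integrable (fun z => ∑ k ∈ range n, c k * Y k z) μ :=
    integrable_finsetSum _ fun k _ =>
      ((memLp_residual hX2 hYdef k).integrable one_le_two).const_mul _
  simp only [inner_sum_residualDir hYdef]
  rw [integral_add hint (integrable_const _), integral_sum_mul_residual hX2 hYdef hYmean]
  simp

theorem integral_sq_inner_sum_residualDir_sub_integral
    (hX2 : ∀ k, Integrable (fun z : ℓ² => z k ^ 2) μ)
    (hYdef : ∀ k z, Y k z = z k - b k - ∑ j ∈ range k, β k j * z j)
    (hYmean : ∀ k, ∫ z, Y k z ∂μ = 0) (hYorth : ∀ k j, j < k → ∫ z, Y k z * z j ∂μ = 0)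
    {τ : ℕ → ℝ} (hτ : ∀ k, ∫ z, Y k z ^ 2 ∂μ = τ k ^ 2) (n : ℕ) (c : ℕ → ℝ) :
    ∫ x, (⟪∑ k ∈ range n, c k • residualDir β k, x⟫ -
        ∫ z, ⟪∑ k ∈ range n, c k • residualDir β k, z⟫ ∂μ) ^ 2 ∂μ =
      ∑ k ∈ range n, c k ^ 2 * τ k ^ 2 := by
  have hmem : MemLp (fun z => ∑ k ∈ range n, c k * Y k z) 2 μ :=
    memLp_finsetSum _ fun k _ => (memLp_residual hX2 hYdef k).const_mul _
  simp only [inner_sum_residualDir_sub_integral hX2 hYdef hYmean]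
  rw [← variance_of_integral_eq_zero hmem.aestronglyMeasurable.aemeasurable
      (integral_sum_mul_residual hX2 hYdef hYmean n c),
    variance_sum_const_mul_of_covariance_eq_zero
      (fun k _ => memLp_residual hX2 hYdef k)
      (fun k _ l _ hkl => covariance_residual_eq_zero hX2 hYdef hYmean hYorth hkl)]
  simp only [variance_residual hX2 hYdef hYmean hτ]

theorem projDepth_eq_zero_of_tendsto_sum_sq (hX2 : ∀ k, Integrable (fun z : ℓ² => z k ^ 2) μ)
    (hYdef : ∀ k z, Y k z = z k - b k - ∑ j ∈ range k, β k j * z j)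
    (hYmean : ∀ k, ∫ z, Y k z ∂μ = 0) (hYorth : ∀ k j, j < k → ∫ z, Y k z * z j ∂μ = 0)
    {τ : ℕ → ℝ} (hτpos : ∀ k, 0 < τ k) (hτ : ∀ k, ∫ z, Y k z ^ 2 ∂μ = τ k ^ 2) {x : ℓ²}
    (hx : Tendsto (fun n => ∑ k ∈ range n, (Y k x / τ k) ^ 2) atTop atTop) :
    projDepth μ x = 0 := by
  refine projDepth_eq_zero_of_forall_exists_le μ x fun ρ => ?_
  obtain ⟨n, hn⟩ := (hx.eventually_ge_atTop (ρ ^ 2 + 1)).exists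
  set S := ∑ k ∈ range n, (Y k x / τ k) ^ 2
  have hnum : ∑ k ∈ range n, Y k x / τ k ^ 2 * Y k x = S :=
    sum_congr rfl fun k _ => by field_simp
  have hvar : ∑ k ∈ range n, (Y k x / τ k ^ 2) ^ 2 * τ k ^ 2 = S :=
    sum_congr rfl fun k _ => by have := (hτpos k).ne'; field_simp
  refine ⟨∑ k ∈ range n, (Y k x / τ k ^ 2) • residualDir β k, ?_, ?_⟩ <;>
    rw [integral_sq_inner_sum_residualDir_sub_integral hX2 hYdef hYmean hYorth hτ, hvar]
  · linarith [sq_nonneg ρ]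
  · rw [inner_sum_residualDir_sub_integral hX2 hYdef hYmean, hnum,
      abs_of_nonneg (by positivity), Real.div_sqrt]
    exact (le_abs_self ρ).trans (Real.abs_le_sqrt (by linarith))

end Residual

theorem projDepth_ae_eq_zero_general
    [MeasurableSpace (lp (fun _ : ℕ => ℝ) 2)] [BorelSpace (lp (fun _ : ℕ => ℝ) 2)]
    (μ : Measure (lp (fun _ : ℕ => ℝ) 2)) [IsProbabilityMeasure μ]
    -- the coordinates of `X` have finite, summable second moments
    (hX2 : ∀ k : ℕ, Integrable (fun z : lp (fun _ : ℕ => ℝ) 2 => (z k) ^ 2) μ)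
    -- `Y` is the residual sequence of `X`: `Y_k = X_k - (best affine predictor from X_0,…,X_{k-1})`,
    -- characterized by `Y_k` having zero mean and being orthogonal to `X_j`, `j < k`
    (Y : ℕ → lp (fun _ : ℕ => ℝ) 2 → ℝ) (b : ℕ → ℝ) (β : ℕ → ℕ → ℝ)
    (hYdef : ∀ k z, Y k z = z k - b k - ∑ j ∈ Finset.range k, β k j * z j)
    (hYmean : ∀ k, ∫ z, Y k z ∂μ = 0)
    (hYorth : ∀ k j, j < k → ∫ z, Y k z * z j ∂μ = 0)
    -- the residual variances `τ_k² = E(Y_k²)` are positive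
    (τ : ℕ → ℝ) (hτpos : ∀ k, 0 < τ k)
    (hτ : ∀ k, ∫ z, (Y k z) ^ 2 ∂μ = τ k ^ 2)
    -- `Y` is α-mixing with mixing coefficients `a`
    (a : ℕ → ℝ)
    (hmix : ∀ n k : ℕ, ∀ A B : Set (lp (fun _ : ℕ => ℝ) 2),
      MeasurableSet[⨆ i ∈ Finset.Iic n, MeasurableSpace.comap (Y i) (borel ℝ)] A →
      MeasurableSet[⨆ (i : ℕ) (_ : n + k ≤ i), MeasurableSpace.comap (Y i) (borel ℝ)] B →
      |(μ (A ∩ B)).toReal - (μ A).toReal * (μ B).toReal| ≤ a k)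
    (hmix0 : Filter.Tendsto a Filter.atTop (nhds 0))
    -- `∑ a_k^(1-1/2p) < ∞` for some `p ≥ 1`, and `sup_k E[(Y_k/τ_k)^(2r)] < ∞` for some `r > p`
    (p r : ℝ) (hp : 1 ≤ p) (hpr : p < r)
    (hmomInt : ∀ k, Integrable (fun z => |Y k z / τ k| ^ (2 * r)) μ)
    (hmom : ∃ C : ℝ, ∀ k, ∫ z, |Y k z / τ k| ^ (2 * r) ∂μ ≤ C) :
    ∀ᵐ x ∂μ, projDepth μ x = 0 := by
  have hYmeas : ∀ k, Measurable (Y k) := fun k => (continuous_residual hYdef k).measurable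
  obtain ⟨C, hC⟩ := hmom
  obtain ⟨c, hc, hcA⟩ := exists_pos_forall_le_measureReal_half_le_abs (hp.trans_lt hpr)
    (f := fun k z => Y k z / τ k) (fun k => (hYmeas k).div_const _)
    (fun k => by simp [div_pow, integral_div, hτ, (hτpos k).ne']) hmomInt hC
  have hfreq := ae_frequently_mem_preimage_of_mixing hYmeas hmix hmix0
    (S := fun k => {t | 1 / 2 ≤ |t / τ k|})
    (fun k => measurableSet_le measurable_const (measurable_id.div_const _).abs) hc hcA
  filter_upwards [hfreq] with x hx
  exact projDepth_eq_zero_of_tendsto_sum_sq hX2 hYdef hYmean hYorth hτpos hτ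
    (tendsto_sum_sq_atTop_of_frequently_le_abs (w := fun k => Y k x / τ k) one_half_pos hx)

/-- Theorem 2.1 (projection depth part): if the residual sequence `Y` of a random element `X`
of `ℓ²` (with summable coordinate second moments) is `α`-mixing with
`∑ α_k ^ (1 − 1/(2p)) < ∞` for some `p ≥ 1`, all residual variances `τ_k²` are positive, and
`sup_k E[(Y_k/τ_k)^(2r)] < ∞` for some `r > p`, then `PD(x) = 0` for `μ`-a.e. `x`. -/
theorem projDepth_ae_eq_zero
    [MeasurableSpace (lp (fun _ : ℕ => ℝ) 2)] [BorelSpace (lp (fun _ : ℕ => ℝ) 2)]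
    (μ : Measure (lp (fun _ : ℕ => ℝ) 2)) [IsProbabilityMeasure μ]
    -- the coordinates of `X` have finite, summable second moments
    (hX2 : ∀ k : ℕ, Integrable (fun z : lp (fun _ : ℕ => ℝ) 2 => (z k) ^ 2) μ)
    (hXsum : Summable fun k : ℕ => ∫ z : lp (fun _ : ℕ => ℝ) 2, (z k) ^ 2 ∂μ)
    -- `Y` is the residual sequence of `X`: `Y_k = X_k - (best affine predictor from X_0,…,X_{k-1})`,
    -- characterized by `Y_k` having zero mean and being orthogonal to `X_j`, `j < k`
    (Y : ℕ → lp (fun _ : ℕ => ℝ) 2 → ℝ) (b : ℕ → ℝ) (β : ℕ → ℕ → ℝ)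
    (hYdef : ∀ k z, Y k z = z k - b k - ∑ j ∈ Finset.range k, β k j * z j)
    (hYmean : ∀ k, ∫ z, Y k z ∂μ = 0)
    (hYorth : ∀ k j, j < k → ∫ z, Y k z * z j ∂μ = 0)
    -- the residual variances `τ_k² = E(Y_k²)` are positive
    (τ : ℕ → ℝ) (hτpos : ∀ k, 0 < τ k)
    (hτ : ∀ k, ∫ z, (Y k z) ^ 2 ∂μ = τ k ^ 2)
    -- `Y` is α-mixing with mixing coefficients `a`
    (a : ℕ → ℝ) (ha0 : ∀ k, 0 ≤ a k)
    (hmix : ∀ n k : ℕ, ∀ A B : Set (lp (fun _ : ℕ => ℝ) 2),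
      MeasurableSet[⨆ i ∈ Finset.Iic n, MeasurableSpace.comap (Y i) (borel ℝ)] A →
      MeasurableSet[⨆ (i : ℕ) (_ : n + k ≤ i), MeasurableSpace.comap (Y i) (borel ℝ)] B →
      |(μ (A ∩ B)).toReal - (μ A).toReal * (μ B).toReal| ≤ a k)
    (hmix0 : Filter.Tendsto a Filter.atTop (nhds 0))
    -- `∑ a_k^(1-1/2p) < ∞` for some `p ≥ 1`, and `sup_k E[(Y_k/τ_k)^(2r)] < ∞` for some `r > p`
    (p r : ℝ) (hp : 1 ≤ p) (hpr : p < r)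
    (hasum : Summable fun k => a k ^ (1 - 1 / (2 * p)))
    (hmomInt : ∀ k, Integrable (fun z => |Y k z / τ k| ^ (2 * r)) μ)
    (hmom : ∃ C : ℝ, ∀ k, ∫ z, |Y k z / τ k| ^ (2 * r) ∂μ ≤ C) :
    ∀ᵐ x ∂μ, projDepth μ x = 0 :=
  projDepth_ae_eq_zero_general μ hX2 Y b β hYdef hYmean hYorth τ hτpos hτ a hmix hmix0 p r hp hpr
    hmomInt hmom
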